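/- For every real κ with 1 < κ < 4, the inversive products of the two disjoint pairs of the standard pyramidal disk packing satisfy ⟨v_1, v_{-1}⟩ = 1 − 2κ and ⟨v_2, v_{-2}⟩ = 1 − 8/κ. Consequently, setting κ₁ := κ and defining κ₂ by ⟨v_2, v_{-2}⟩ = 1 − 2κ₂, one has κ₂ = 4/κ and hence κ₁ · κ₂ = 4. -/

import Mathlib

noncomputable section

def lprod (u v : Fin 4 → ℝ) : ℝ := u 0 * v 0 + u 1 * v 1 + u 2 * v 2 - u 3 * v 3

/-- Inversive coordinates of the disks of the standard pyramidal disk packing. -/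
def vx : Fin 4 → ℝ := ![0, -1, 1, 1]
def v1 (κ : ℝ) : Fin 4 → ℝ := ![0, 1 - κ, -1, κ - 1]
def v2 (κ : ℝ) : Fin 4 → ℝ := ![2 / Real.sqrt κ, 0, 2 / κ - 1, 2 / κ]
def vm1 : Fin 4 → ℝ := ![0, 1, 1, 1]
def vm2 (κ : ℝ) : Fin 4 → ℝ := ![-(2 / Real.sqrt κ), 0, 2 / κ - 1, 2 / κ]

@[simp]
theorem lprod_vecCons (a₀ a₁ a₂ a₃ b₀ b₁ b₂ b₃ : ℝ) :
    lprod ![a₀, a₁, a₂, a₃] ![b₀, b₁, b₂, b₃] = a₀ * b₀ + a₁ * b₁ + a₂ * b₂ - a₃ * b₃ :=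
  rfl

theorem lprod_v1_vm1 (κ : ℝ) : lprod (v1 κ) vm1 = 1 - 2 * κ := by
  simp only [v1, vm1, lprod_vecCons]
  ring

theorem lprod_v2_vm2 {κ : ℝ} (hκ : 0 ≤ κ) : lprod (v2 κ) (vm2 κ) = 1 - 8 / κ := by
  have hsqrt : 2 / Real.sqrt κ * -(2 / Real.sqrt κ) = -(4 / κ) := by
    rw [mul_neg, div_mul_div_comm, Real.mul_self_sqrt hκ]
    norm_num
  simp only [v2, vm2, lprod_vecCons, hsqrt]
  ring

theorem eq_four_div_of_one_sub_eight_div_eq {κ κ₂ : ℝ} (h : 1 - 8 / κ = 1 - 2 * κ₂) :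
    κ₂ = 4 / κ := by
  linarith [show 8 / κ = 2 * (4 / κ) by ring]

theorem pyramidal_standard_curvatures_general (κ : ℝ) (hκ1 : 1 < κ) :
    lprod (v1 κ) vm1 = 1 - 2 * κ ∧
    lprod (v2 κ) (vm2 κ) = 1 - 8 / κ ∧
    ∀ κ₂ : ℝ, lprod (v2 κ) (vm2 κ) = 1 - 2 * κ₂ → κ₂ = 4 / κ ∧ κ * κ₂ = 4 := by
  have hκ : 0 < κ := by linarith
  have h₂ := lprod_v2_vm2 hκ.le
  refine ⟨lprod_v1_vm1 κ, h₂, fun κ₂ hκ₂ => ?_⟩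
  obtain rfl := eq_four_div_of_one_sub_eight_div_eq (h₂ ▸ hκ₂)
  exact ⟨rfl, mul_div_cancel₀ 4 hκ.ne'⟩

/-- For `1 < κ < 4`, the inversive products of the two disjoint pairs are
`⟨v₁, v₋₁⟩ = 1 − 2κ` and `⟨v₂, v₋₂⟩ = 1 − 8/κ`; consequently the second standard
curvature `κ₂`, defined by `⟨v₂, v₋₂⟩ = 1 − 2κ₂`, equals `4/κ`, so `κ·κ₂ = 4`. -/
theorem pyramidal_standard_curvatures (κ : ℝ) (hκ1 : 1 < κ) (hκ4 : κ < 4) :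
    lprod (v1 κ) vm1 = 1 - 2 * κ ∧
    lprod (v2 κ) (vm2 κ) = 1 - 8 / κ ∧
    ∀ κ₂ : ℝ, lprod (v2 κ) (vm2 κ) = 1 - 2 * κ₂ → κ₂ = 4 / κ ∧ κ * κ₂ = 4 :=
  pyramidal_standard_curvatures_general κ hκ1

end
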